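/- Let p > 3 be a prime such that for every natural number r the congruence 2^r ≡ −1 (mod p) fails. Then χ(G(p + 2, 3, 2)) = p, i.e., for n = p + 2 the chromatic number of G(n, 3, 2) equals exactly n − 2. -/

import Mathlib

/-!
The triples `{0, 1, i + 2}`, `i < p`, pairwise meet in `{0, 1}`: a clique of size `p`.

For a `p`-colouring by `ZMod p`, view the ground set as `ZMod p` plus two points at infinity.
As `-1` is not a power of `2`, the cosets of `⟨2⟩` in `(ZMod p)ˣ` pair off as `{C, -C}`, so
choosing one coset of each pair gives a sign `σ` with `σ (-z) ↔ ¬ σ z` and `σ (2 * z) ↔ σ z`.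
Colour `{a, b, c}` by `a + b + c`, `{∞, a, b}` by `a + b + x` where `x ∈ {a, b}` is the point with
`σ (± (x - y))` (the sign depending on which point at infinity), and `{∞, ∞', a}` by `3 * a`.
Triples sharing two points then get different colours; the one delicate case, `{∞, u, b}` against
`{∞, v, b}` with `2 * u + b = v + 2 * b`, is excluded because `v - b = 2 * (u - b)` would have
both signs.
-/

/-- The graph `G(n, r, s)`: vertices are the `r`-element subsets of `{0, 1, ..., n-1}`,
two of them adjacent iff their intersection has exactly `s` elements. -/
def distGraph (n r s : ℕ) : SimpleGraph {A : Finset (Fin n) // A.card = r} where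
  Adj A B := A ≠ B ∧ (A.1 ∩ B.1).card = s
  symm := by
    constructor
    intro A B h
    exact ⟨h.1.symm, by rw [Finset.inter_comm]; exact h.2⟩
  loopless := by
    constructor
    intro A h
    exact h.1 rfl

open Finset

theorem exists_set_apply_mem_iff_notMem {α : Type*} {f : α → α} (hf : Function.Involutive f)
    (hfix : ∀ x, f x ≠ x) : ∃ S : Set α, ∀ x, f x ∈ S ↔ x ∉ S := by
  refine ⟨{x | WellOrderingRel x (f x)}, fun x => ?_⟩
  simp only [Set.mem_ofPred_eq, hf x]
  refine ⟨fun h h' => asymm h h', fun h => ?_⟩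
  exact ((trichotomous_of WellOrderingRel x (f x)).resolve_left h).resolve_left (hfix x).symm

theorem exists_set_mul_mem_iff {G : Type*} [CommGroup G] (H : Subgroup G) {t : G}
    (ht : t * t ∈ H) (htH : t ∉ H) :
    ∃ S : Set G, (∀ g, t * g ∈ S ↔ g ∉ S) ∧ ∀ h ∈ H, ∀ g, h * g ∈ S ↔ g ∈ S := by
  have hinv : Function.Involutive ((t : G ⧸ H) * ·) := fun q => by
    dsimp only
    rw [← mul_assoc, ← QuotientGroup.mk_mul, (QuotientGroup.eq_one_iff _).2 ht, one_mul]
  obtain ⟨S, hS⟩ := exists_set_apply_mem_iff_notMem hinv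
    fun q hq => htH <| (QuotientGroup.eq_one_iff _).1 (mul_eq_right.1 hq)
  refine ⟨((↑) : G → G ⧸ H) ⁻¹' S, fun g => hS g, fun h hh g => ?_⟩
  rw [Set.mem_preimage, Set.mem_preimage, mul_comm, QuotientGroup.mk_mul_of_mem _ hh]

theorem Finset.card_add_card_eq_two_cases {α : Type*} [DecidableEq α] {L : Finset α}
    {R : Finset Bool} (h : #L + #R = 2) :
    (∃ a b, a ≠ b ∧ L = {a, b} ∧ R = ∅) ∨ (∃ b i, L = {b} ∧ R = {i}) ∨ (L = ∅ ∧ R = univ) := by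
  have hR : #R ≤ 2 := card_le_univ R
  obtain hR | hR | hR : #R = 0 ∨ #R = 1 ∨ #R = 2 := by omega
  · obtain ⟨a, b, hab, rfl⟩ := card_eq_two.1 (by omega : #L = 2)
    exact Or.inl ⟨a, b, hab, rfl, card_eq_zero.1 hR⟩
  · obtain ⟨b, rfl⟩ := card_eq_one.1 (by omega : #L = 1)
    obtain ⟨i, rfl⟩ := card_eq_one.1 hR
    exact Or.inr (Or.inl ⟨b, i, rfl, rfl⟩)
  · exact Or.inr (Or.inr ⟨card_eq_zero.1 (by omega), eq_univ_of_card R hR⟩)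

section TripleColor

variable {F : Type*} [Field F]

structure IsDoublingInvariantSign (σ : F → Prop) : Prop where
  neg_iff : ∀ z ≠ 0, σ (-z) ↔ ¬ σ z
  two_mul_iff : ∀ z ≠ 0, σ (2 * z) ↔ σ z

theorem exists_isDoublingInvariantSign (h : ∀ r : ℕ, (2 : F) ^ r ≠ -1) :
    ∃ σ : F → Prop, IsDoublingInvariantSign σ := by
  have h2 : (2 : F) ≠ 0 := fun h0 => h 0 (by linear_combination h0)
  have hneg : (-1 : Fˣ) ∉ Subgroup.zpowers (Units.mk0 2 h2) := by
    intro hmem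
    obtain ⟨k, hk⟩ := Subgroup.mem_zpowers_iff.1 hmem
    apply h k.natAbs
    rcases Int.natAbs_eq k with hk' | hk'
    · rw [hk', zpow_natCast] at hk
      simpa using congrArg Units.val hk
    · rw [hk', zpow_neg, zpow_natCast, inv_eq_iff_eq_inv, inv_neg, inv_one] at hk
      simpa using congrArg Units.val hk
  obtain ⟨S, hS_neg, hS_two⟩ := exists_set_mul_mem_iff _ (by simp) hneg
  let σ : F → Prop := fun z => ∃ u ∈ S, (u : F) = z
  have hσ (u : Fˣ) : σ u ↔ u ∈ S :=
    ⟨fun ⟨v, hv, huv⟩ => Units.ext huv ▸ hv, fun hu => ⟨u, hu, rfl⟩⟩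
  refine ⟨σ, ⟨fun z hz => ?_, fun z hz => ?_⟩⟩
  · obtain ⟨u, rfl⟩ := hz.isUnit
    rw [← Units.val_neg, hσ, hσ, ← neg_one_mul]
    exact hS_neg u
  · obtain ⟨u, rfl⟩ := hz.isUnit
    rw [show (2 : F) * u = ↑(Units.mk0 2 h2 * u) from rfl, hσ, hσ]
    exact hS_two _ (Subgroup.mem_zpowers _) u

open Classical in
noncomputable def pick (τ : F → Prop) (a b : F) : F := if τ (a - b) then a else b

theorem pick_eq_or (τ : F → Prop) (a b : F) : pick τ a b = a ∨ pick τ a b = b := by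
  unfold pick
  split_ifs <;> simp

def signAt (σ : F → Prop) : Bool → F → Prop
  | true => σ
  | false => fun z => σ (-z)

open Classical in
/-- The colour of the triple with finite points `L` and points at infinity `R`. -/
noncomputable def tripleColor (σ : F → Prop) (L : Finset F) (R : Finset Bool) : F :=
  ∑ x ∈ L, x + ∑ i ∈ R, ∑ x ∈ L with ∀ y ∈ L, y ≠ x → signAt σ i (x - y), x

theorem tripleColor_empty_right (σ : F → Prop) (L : Finset F) :
    tripleColor σ L ∅ = ∑ x ∈ L, x := by
  simp [tripleColor]

theorem tripleColor_singleton (σ : F → Prop) (a : F) (R : Finset Bool) :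
    tripleColor σ {a} R = (#R + 1) * a := by
  simp only [tripleColor, sum_singleton, mem_singleton, ne_eq, forall_eq, filter_singleton,
    not_true_eq_false, IsEmpty.forall_iff, ↓reduceIte, sum_const, nsmul_eq_mul]
  ring

namespace IsDoublingInvariantSign

variable {σ : F → Prop} (hσ : IsDoublingInvariantSign σ)
include hσ

theorem two_ne_zero : (2 : F) ≠ 0 := by
  intro h
  have h1 : (-1 : F) = 1 := by linear_combination -h
  simpa [h1] using hσ.neg_iff 1 one_ne_zero

-- in characteristic `3`, doubling is negation
theorem three_ne_zero : (3 : F) ≠ 0 := by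
  intro h
  have h1 : (2 : F) * 1 = -1 := by linear_combination h
  have := hσ.two_mul_iff 1 one_ne_zero
  rw [h1, hσ.neg_iff 1 one_ne_zero] at this
  tauto

theorem comp_neg : IsDoublingInvariantSign fun z => σ (-z) where
  neg_iff z hz := hσ.neg_iff (-z) (neg_ne_zero.2 hz)
  two_mul_iff z hz := by rw [← mul_neg]; exact hσ.two_mul_iff (-z) (neg_ne_zero.2 hz)

theorem signAt_isDoublingInvariantSign (i : Bool) : IsDoublingInvariantSign (signAt σ i) := by
  cases i
  exacts [hσ.comp_neg, hσ]

theorem signAt_iff_not {i j : Bool} (hij : i ≠ j) {z : F} (hz : z ≠ 0) :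
    signAt σ i z ↔ ¬ signAt σ j z := by
  obtain rfl : j = !i := Bool.eq_not_iff.2 hij.symm
  cases i
  exacts [hσ.neg_iff z hz, iff_not_comm.1 (hσ.neg_iff z hz)]

theorem add_pick_ne {u v b : F} (huv : u ≠ v) (hub : u ≠ b) (hvb : v ≠ b) :
    u + pick σ u b ≠ v + pick σ v b := by
  have h2 := hσ.two_ne_zero
  have hu := hσ.two_mul_iff (u - b) (sub_ne_zero.2 hub)
  have hv := hσ.two_mul_iff (v - b) (sub_ne_zero.2 hvb)
  unfold pick
  intro h
  split_ifs at h with hsu hsv hsv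
  · exact huv (mul_left_cancel₀ h2 (by linear_combination h))
  · exact hsv (by rwa [show v - b = 2 * (u - b) by linear_combination -h, hu])
  · exact hsu (by rwa [show u - b = 2 * (v - b) by linear_combination h, hv])
  · exact huv (by linear_combination h)

theorem pick_signAt_ne {i j : Bool} (hij : i ≠ j) {a b : F} (hab : a ≠ b) :
    pick (signAt σ i) a b ≠ pick (signAt σ j) a b := by
  have := hσ.signAt_iff_not hij (sub_ne_zero.2 hab)
  unfold pick
  split_ifs <;> tauto

variable [DecidableEq F]

theorem tripleColor_pair_singleton {a b : F} (hab : a ≠ b) (i : Bool) :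
    tripleColor σ {a, b} {i} = a + b + pick (signAt σ i) a b := by
  have hba : signAt σ i (b - a) ↔ ¬ signAt σ i (a - b) := by
    rw [← neg_sub]
    exact (hσ.signAt_isDoublingInvariantSign i).neg_iff _ (sub_ne_zero.2 hab)
  by_cases h : signAt σ i (a - b) <;>
    simp [tripleColor, sum_filter, sum_pair hab, hab, hab.symm, h, hba, pick]

theorem tripleColor_insert_left_ne_insert_left {L : Finset F} {R : Finset Bool}
    (hLR : #L + #R = 2) {u v : F} (hu : u ∉ L) (hv : v ∉ L) (huv : u ≠ v) :
    tripleColor σ (insert u L) R ≠ tripleColor σ (insert v L) R := by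
  obtain ⟨a, b, hab, rfl, rfl⟩ | ⟨b, i, rfl, rfl⟩ | ⟨rfl, rfl⟩ := card_add_card_eq_two_cases hLR
  · rw [tripleColor_empty_right, tripleColor_empty_right, sum_insert hu, sum_insert hv]
    simpa using huv
  · rw [mem_singleton] at hu hv
    rw [tripleColor_pair_singleton hσ hu, tripleColor_pair_singleton hσ hv]
    have := (hσ.signAt_isDoublingInvariantSign i).add_pick_ne huv hu hv
    contrapose! this
    linear_combination this
  · have h3 : ((#(univ : Finset Bool) : ℕ) : F) + 1 ≠ 0 := by
      simpa [show (2 : F) + 1 = 3 by norm_num] using hσ.three_ne_zero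
    rw [insert_empty, insert_empty, tripleColor_singleton, tripleColor_singleton]
    exact fun h => huv (mul_left_cancel₀ h3 h)

theorem tripleColor_insert_left_ne_insert_right {L : Finset F} {R : Finset Bool}
    (hLR : #L + #R = 2) {u : F} {j : Bool} (hu : u ∉ L) (hj : j ∉ R) :
    tripleColor σ (insert u L) R ≠ tripleColor σ L (insert j R) := by
  obtain ⟨a, b, hab, rfl, rfl⟩ | ⟨b, i, rfl, rfl⟩ | ⟨rfl, rfl⟩ := card_add_card_eq_two_cases hLR
  · obtain ⟨hua, hub⟩ : u ≠ a ∧ u ≠ b := by simpa using hu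
    rw [tripleColor_empty_right, sum_insert hu, sum_pair hab, insert_empty,
      tripleColor_pair_singleton hσ hab]
    intro h
    rcases pick_eq_or (signAt σ j) a b with hp | hp <;> rw [hp] at h
    exacts [hua (by linear_combination h), hub (by linear_combination h)]
  · rw [mem_singleton] at hu hj
    rw [tripleColor_pair_singleton hσ hu, tripleColor_singleton, card_pair hj]
    intro h
    rcases pick_eq_or (signAt σ i) u b with hp | hp <;> rw [hp] at h
    · exact hu (mul_left_cancel₀ hσ.two_ne_zero (by linear_combination h))
    · exact hu (by linear_combination h)
  · exact absurd (mem_univ j) hj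

theorem tripleColor_insert_right_ne_insert_right {L : Finset F} {R : Finset Bool}
    (hLR : #L + #R = 2) {i j : Bool} (hi : i ∉ R) (hj : j ∉ R) (hij : i ≠ j) :
    tripleColor σ L (insert i R) ≠ tripleColor σ L (insert j R) := by
  obtain ⟨a, b, hab, rfl, rfl⟩ | ⟨b, k, rfl, rfl⟩ | ⟨rfl, rfl⟩ := card_add_card_eq_two_cases hLR
  · rw [insert_empty, insert_empty, tripleColor_pair_singleton hσ hab,
      tripleColor_pair_singleton hσ hab]
    simpa using hσ.pick_signAt_ne hij hab
  · rw [mem_singleton] at hi hj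
    cases i <;> cases j <;> cases k <;> simp_all
  · exact absurd (mem_univ i) hi

theorem tripleColor_insert_ne {S : Finset (F ⊕ Bool)} (hS : #S = 2) {x y : F ⊕ Bool}
    (hx : x ∉ S) (hy : y ∉ S) (hxy : x ≠ y) :
    tripleColor σ (insert x S).toLeft (insert x S).toRight ≠
      tripleColor σ (insert y S).toLeft (insert y S).toRight := by
  have hLR : #S.toLeft + #S.toRight = 2 := by rw [card_toLeft_add_card_toRight, hS]
  rcases x with u | i <;> rcases y with v | j <;>
    simp only [toLeft_insert_inl, toLeft_insert_inr, toRight_insert_inl, toRight_insert_inr]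
  · exact hσ.tripleColor_insert_left_ne_insert_left hLR (by simpa using hx) (by simpa using hy)
      (by simpa using hxy)
  · exact hσ.tripleColor_insert_left_ne_insert_right hLR (by simpa using hx) (by simpa using hy)
  · exact (hσ.tripleColor_insert_left_ne_insert_right hLR (by simpa using hy)
      (by simpa using hx)).symm
  · exact hσ.tripleColor_insert_right_ne_insert_right hLR (by simpa using hx) (by simpa using hy)
      (by simpa using hxy)

theorem tripleColor_ne_of_card_inter {A B : Finset (F ⊕ Bool)} (hA : #A = 3) (hB : #B = 3)
    (hAB : #(A ∩ B) = 2) (hne : A ≠ B) :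
    tripleColor σ A.toLeft A.toRight ≠ tripleColor σ B.toLeft B.toRight := by
  obtain ⟨x, hx, hxA⟩ := exists_eq_insert_iff.2 ⟨inter_subset_left (s₁ := A) (s₂ := B), by omega⟩
  obtain ⟨y, hy, hyB⟩ := exists_eq_insert_iff.2 ⟨inter_subset_right (s₁ := A) (s₂ := B), by omega⟩
  have := hσ.tripleColor_insert_ne hAB hx hy fun hxy => hne (hxA.symm.trans (hxy ▸ hyB))
  rwa [hxA, hyB] at this

end IsDoublingInvariantSign

end TripleColor

theorem distGraph_colorable_of_embedding {n r s : ℕ} {β C : Type*} [DecidableEq β] [Fintype C]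
    (e : Fin n ↪ β) (c : Finset β → C)
    (hc : ∀ A B : Finset β, #A = r → #B = r → #(A ∩ B) = s → A ≠ B → c A ≠ c B) :
    (distGraph n r s).Colorable (Fintype.card C) := by
  refine (SimpleGraph.Coloring.mk (fun A => c (A.1.map e)) ?_).colorable
  rintro A B ⟨hne, hAB⟩
  refine hc _ _ (by rw [card_map, A.2]) (by rw [card_map, B.2])
    (by rw [← map_inter, card_map, hAB]) ?_
  exact fun h => hne (Subtype.ext (map_injective e h))

theorem le_chromaticNumber_distGraph (m : ℕ) :
    (m : ℕ∞) ≤ (distGraph (m + 2) 3 2).chromaticNumber := by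
  let f : Fin m → {A : Finset (Fin (m + 2)) // #A = 3} := fun i =>
    ⟨{0, 1, i.addNat 2}, by rw [card_insert_of_notMem, card_pair] <;> simp [Fin.ext_iff]⟩
  refine SimpleGraph.le_chromaticNumber_of_pairwise_adj (by simp) f fun i j hij => ⟨?_, ?_⟩
  · intro h
    have hmem : i.addNat 2 ∈ (f j).1 := h ▸ by simp [f]
    exact hij (Fin.ext (by simpa [f, Fin.ext_iff] using hmem))
  · have hinter : (f i).1 ∩ (f j).1 = {0, 1} := by
      have := Fin.val_ne_of_ne hij
      ext k
      simp only [f, mem_inter, mem_insert, mem_singleton, Fin.ext_iff, Fin.val_addNat,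
        Fin.val_zero, Fin.val_one]
      omega
    rw [hinter, card_pair (by simp)]

theorem stmt_19_general (p : ℕ) (hp : p.Prime)
    (h2 : ∀ r : ℕ, (2 : ZMod p) ^ r ≠ -1) :
    (distGraph (p + 2) 3 2).chromaticNumber = (p : ℕ∞) := by
  have := Fact.mk hp
  obtain ⟨σ, hσ⟩ := exists_isDoublingInvariantSign h2
  have e : Fin (p + 2) ≃ ZMod p ⊕ Bool := Fintype.equivOfCardEq (by simp)
  have hcol := distGraph_colorable_of_embedding e.toEmbedding _ fun A B hA hB hAB hne =>
    hσ.tripleColor_ne_of_card_inter hA hB hAB hne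
  rw [ZMod.card] at hcol
  exact le_antisymm hcol.chromaticNumber_le (le_chromaticNumber_distGraph p)

theorem stmt_19 (p : ℕ) (hp : p.Prime) (hp3 : 3 < p)
    (h2 : ∀ r : ℕ, (2 : ZMod p) ^ r ≠ -1) :
    (distGraph (p + 2) 3 2).chromaticNumber = (p : ℕ∞) :=
  stmt_19_general p hp h2
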